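/- Let V be a nonempty vertical path whose final step is S, and let H be a horizontal path. Define the flip f(σ) of a list σ over {E, W, N, S} to be the list obtained by replacing every maximal contiguous block of outward steps (steps in {E, N}) with the same block written in reverse order. Then f maps shuffles of V and H to shuffles of V and H, and for every shuffle σ of V and H, the shifted In-Vert of f(σ) equals the signed peak-count of σ. -/

import Mathlib

inductive Step : Type
  | E | W | N | S
deriving DecidableEq, Repr

open Step

/-- A step is vertical (North or South). -/
def isVert : Step → Bool
  | N => true
  | S => true
  | _ => false

/-- A step is horizontal (East or West). -/
def isHoriz : Step → Bool
  | E => true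
  | W => true
  | _ => false

/-- `σ` is a shuffle (interleaving) of the vertical path `V` and horizontal path `H`:
its subsequence of vertical steps is `V` and its subsequence of horizontal steps is `H`. -/
def IsShuffle (V H σ : List Step) : Prop :=
  σ.filter isVert = V ∧ σ.filter isHoriz = H

/-- The list of adjacent pairs `(σ_i, σ_{i+1})` of a list. -/
def pairs (σ : List Step) : List (Step × Step) := σ.zip σ.tail

/-- Signed peak-count: (# of (N,W) adjacent pairs) − (# of (E,S) adjacent pairs). -/
def signedPeak (σ : List Step) : ℤ :=
  (((pairs σ).filter (fun p => decide (p.1 = N ∧ p.2 = W))).length : ℤ)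
  - (((pairs σ).filter (fun p => decide (p.1 = E ∧ p.2 = S))).length : ℤ)

/-- Peak-count: (# of (N,W) adjacent pairs) + (# of (E,S) adjacent pairs). -/
def peakCount (σ : List Step) : ℕ :=
  ((pairs σ).filter (fun p => decide (p.1 = N ∧ p.2 = W))).length
  + ((pairs σ).filter (fun p => decide (p.1 = E ∧ p.2 = S))).length

/-- Binomial coefficient with integer arguments, equal to 0 unless `0 ≤ b ≤ a`. -/
def zch (a b : ℤ) : ℕ := if 0 ≤ b ∧ b ≤ a then a.toNat.choose b.toNat else 0

/-- In-Vert of `σ`: the number of indices `j ≥ 1` such that `σ_j` is vertical and either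
`j = 1` or `σ_{j−1}` is an inward step (inward steps are `{W, S}`).  This corresponds to
viewing `σ` as preceded by a virtual zeroth inward step and counting occurrences of an
inward step immediately followed by a vertical step. -/
def invert (σ : List Step) : ℕ :=
  (if σ.head? = some Step.N ∨ σ.head? = some Step.S then 1 else 0)
  + ((pairs σ).filter (fun p => decide ((p.1 = Step.W ∨ p.1 = Step.S) ∧ (p.2 = Step.N ∨ p.2 = Step.S)))).length

/-- A step is outward (East or North). -/
def isOut : Step → Bool
  | Step.E => true
  | Step.N => true
  | _ => false

/-- Auxiliary function for `flipRuns`: `acc` holds the current (reversed) maximal run of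
outward steps. -/
def flipAux : List Step → List Step → List Step
  | acc, [] => acc
  | acc, a :: rest =>
    if isOut a then flipAux (a :: acc) rest
    else acc ++ a :: flipAux [] rest

/-- The flipRuns of `σ`: every maximal contiguous block of outward steps is replaced by the
same block written in reverse order. -/
def flipRuns (σ : List Step) : List Step := flipAux [] σ

/-! Split `σ` into maximal outward runs `B`, each followed by an inward step `i`. In `flipRuns σ`
the reversed run starts right after an inward step (or at the start), so it contributes an In-Vert
exactly when the last step `b` of `B` is `N`; when `B` is empty, `i` itself contributes one exactly
when it is `S`. After subtracting the `S` steps, the segment `B ++ [i]` thus contributes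
`[b = N] - [i = S]`, which for `b ∈ {E, N}` and `i ∈ {W, S}` is the signed peak of the pair
`(b, i)`; every other adjacent pair of `σ` lies inside a run or starts with an inward step and
contributes nothing to either side. A trailing run ending in `N` would add one more In-Vert; it
cannot occur since the last vertical step of `σ` is `S`. -/

theorem flipAux_of_forall_isOut {B : List Step} (hB : ∀ s ∈ B, isOut s = true)
    (acc : List Step) : flipAux acc B = B.reverse ++ acc := by
  induction B generalizing acc with
  | nil => rfl
  | cons a B ih =>
    rw [flipAux, if_pos (hB a (by simp)), ih (fun s hs => hB s (by simp [hs]))]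
    simp

theorem flipAux_append_cons {B : List Step} (hB : ∀ s ∈ B, isOut s = true) {i : Step}
    (hi : isOut i = false) (l acc : List Step) :
    flipAux acc (B ++ i :: l) = B.reverse ++ acc ++ i :: flipRuns l := by
  induction B generalizing acc with
  | nil => simp [flipAux, hi, flipRuns]
  | cons a B ih =>
    rw [List.cons_append, flipAux, if_pos (hB a (by simp)), ih (fun s hs => hB s (by simp [hs]))]
    simp

theorem flipRuns_of_forall_isOut {B : List Step} (hB : ∀ s ∈ B, isOut s = true) :
    flipRuns B = B.reverse := by
  simp [flipRuns, flipAux_of_forall_isOut hB]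

theorem flipRuns_append_cons {B : List Step} (hB : ∀ s ∈ B, isOut s = true) {i : Step}
    (hi : isOut i = false) (l : List Step) :
    flipRuns (B ++ i :: l) = B.reverse ++ i :: flipRuns l := by
  simp [flipRuns, flipAux_append_cons hB hi]

@[elab_as_elim]
theorem induction_on_outward_runs {motive : List Step → Prop}
    (run : ∀ B, (∀ s ∈ B, isOut s = true) → motive B)
    (run_append : ∀ B i l, (∀ s ∈ B, isOut s = true) → isOut i = false → motive l →
      motive (B ++ i :: l))
    (σ : List Step) : motive σ := by
  suffices ∀ B, (∀ s ∈ B, isOut s = true) → motive (B ++ σ) from this [] (by simp)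
  induction σ with
  | nil => simpa using run
  | cons a l ih =>
    intro B hB
    cases ha : isOut a
    · exact run_append B a l hB ha (by simpa using ih [] (by simp))
    · simpa using ih (B ++ [a]) (by simpa [or_imp, forall_and, ha] using hB)

theorem List.filter_reverse_of_pairwise_eq {α : Type*} (p : α → Bool) {l : List α}
    (h : ∀ a ∈ l, ∀ b ∈ l, p a → p b → a = b) : l.reverse.filter p = l.filter p := by
  rw [List.filter_reverse]
  match hl : l.filter p with
  | [] => rfl
  | a :: m =>
    have ha : a ∈ l.filter p := hl ▸ List.mem_cons_self
    have hall : ∀ b ∈ l.filter p, b = a := fun b hb => by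
      rw [List.mem_filter] at hb ha
      exact h b hb.1 a ha.1 hb.2 ha.2
    rw [hl] at hall
    rw [List.eq_replicate_of_mem hall, List.reverse_replicate]

theorem filter_flipRuns (p : Step → Bool)
    (hp : ∀ a b, isOut a = true → isOut b = true → p a → p b → a = b) (σ : List Step) :
    (flipRuns σ).filter p = σ.filter p := by
  induction σ using induction_on_outward_runs with
  | run B hB =>
    rw [flipRuns_of_forall_isOut hB]
    exact List.filter_reverse_of_pairwise_eq p fun a ha b hb => hp a b (hB a ha) (hB b hb)
  | run_append B i l hB hi ih =>
    rw [flipRuns_append_cons hB hi, List.filter_append, List.filter_append, List.filter_cons,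
      List.filter_cons, ih,
      List.filter_reverse_of_pairwise_eq p fun a ha b hb => hp a b (hB a ha) (hB b hb)]

theorem eq_of_isOut_of_isVert :
    ∀ a b, isOut a = true → isOut b = true → isVert a = true → isVert b = true → a = b := by
  rintro (_ | _ | _ | _) (_ | _ | _ | _) <;> simp [isOut, isVert]

theorem eq_of_isOut_of_isHoriz :
    ∀ a b, isOut a = true → isOut b = true → isHoriz a = true → isHoriz b = true → a = b := by
  rintro (_ | _ | _ | _) (_ | _ | _ | _) <;> simp [isOut, isHoriz]

theorem isShuffle_flipRuns {V H σ : List Step} (hσ : IsShuffle V H σ) :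
    IsShuffle V H (flipRuns σ) := by
  rw [IsShuffle, filter_flipRuns isVert eq_of_isOut_of_isVert,
    filter_flipRuns isHoriz eq_of_isOut_of_isHoriz]
  exact hσ

theorem count_S_flipRuns (σ : List Step) : (flipRuns σ).count S = σ.count S := by
  rw [← List.count_filter (p := isVert) rfl, filter_flipRuns isVert eq_of_isOut_of_isVert,
    List.count_filter rfl]

def inVertPairs (σ : List Step) : ℕ :=
  ((pairs σ).filter (fun p => decide ((p.1 = W ∨ p.1 = S) ∧ (p.2 = N ∨ p.2 = S)))).length

theorem invert_cons (a : Step) (τ : List Step) :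
    invert (a :: τ) = (if isVert a then 1 else 0) + inVertPairs (a :: τ) := by
  cases a <;> rfl

theorem inVertPairs_cons_of_isOut {a : Step} (ha : isOut a = true) (τ : List Step) :
    inVertPairs (a :: τ) = inVertPairs τ := by
  cases τ with
  | nil => rfl
  | cons b t => cases a <;> cases b <;> simp_all [inVertPairs, pairs, isOut]

theorem inVertPairs_cons_of_not_isOut {i : Step} (hi : isOut i = false) (τ : List Step) :
    inVertPairs (i :: τ) = invert τ := by
  cases τ with
  | nil => rfl
  | cons b t => cases i <;> cases b <;> simp_all [inVertPairs, invert, pairs, isOut, Nat.add_comm]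

theorem inVertPairs_append_of_forall_isOut {C : List Step} (hC : ∀ s ∈ C, isOut s = true)
    (τ : List Step) : inVertPairs (C ++ τ) = inVertPairs τ := by
  induction C with
  | nil => rfl
  | cons c C ih =>
    rw [List.cons_append, inVertPairs_cons_of_isOut (hC c (by simp)),
      ih fun s hs => hC s (by simp [hs])]

theorem signedPeak_cons_cons (a b : Step) (t : List Step) :
    signedPeak (a :: b :: t) =
      ((if a = N ∧ b = W then 1 else 0) - (if a = E ∧ b = S then 1 else 0)) +
        signedPeak (b :: t) := by
  by_cases h₁ : a = N ∧ b = W <;> by_cases h₂ : a = E ∧ b = S <;>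
    simp [signedPeak, pairs, h₁, h₂] <;> ring

theorem signedPeak_cons_of_not_isOut {i : Step} (hi : isOut i = false) (τ : List Step) :
    signedPeak (i :: τ) = signedPeak τ := by
  cases τ with
  | nil => rfl
  | cons b t => cases i <;> simp_all [isOut, signedPeak_cons_cons]

theorem signedPeak_append_of_forall_isOut {C : List Step} (hC : ∀ s ∈ C, isOut s = true)
    {b : Step} (hb : isOut b = true) (τ : List Step) :
    signedPeak (C ++ b :: τ) = signedPeak (b :: τ) := by
  induction C with
  | nil => rfl
  | cons c C ih =>
    have hc := hC c (by simp)
    rw [← ih fun s hs => hC s (by simp [hs])]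
    obtain ⟨d, ρ, hd, hρ⟩ : ∃ d ρ, isOut d = true ∧ C ++ b :: τ = d :: ρ := by
      cases C with
      | nil => exact ⟨b, τ, hb, rfl⟩
      | cons d ρ => exact ⟨d, ρ ++ b :: τ, hC d (by simp), rfl⟩
    rw [List.cons_append, hρ, signedPeak_cons_cons]
    cases c <;> cases d <;> simp_all [isOut]

theorem count_S_eq_zero_of_forall_isOut {B : List Step} (hB : ∀ s ∈ B, isOut s = true) :
    B.count S = 0 :=
  List.count_eq_zero.mpr fun h => by simpa [isOut] using hB S h

theorem getLast?_append_cons_eq_some_iff (B l : List Step) {i x : Step} (hx : i ≠ x) :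
    (B ++ i :: l).getLast? = some x ↔ l.getLast? = some x := by
  rw [List.getLast?_append, List.getLast?_cons]
  cases l.getLast? <;> simp [hx]

theorem invert_flipRuns_sub_count_S (σ : List Step) :
    (invert (flipRuns σ) : ℤ) - σ.count S =
      signedPeak σ + if σ.getLast? = some N then 1 else 0 := by
  induction σ using induction_on_outward_runs with
  | run B hB =>
    rw [flipRuns_of_forall_isOut hB]
    rcases B.eq_nil_or_concat' with rfl | ⟨L, b, rfl⟩
    · rfl
    · have hL : ∀ s ∈ L, isOut s = true := fun s hs => hB s (by simp [hs])
      have hb : isOut b = true := hB b (by simp)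
      rw [List.reverse_concat, invert_cons, ← List.append_nil L.reverse,
        inVertPairs_cons_of_isOut hb, inVertPairs_append_of_forall_isOut (by simpa using hL),
        count_S_eq_zero_of_forall_isOut hB,
        signedPeak_append_of_forall_isOut hL hb]
      cases b <;> simp_all [isOut] <;> rfl
  | run_append B i l hB hi ih =>
    have hlast := getLast?_append_cons_eq_some_iff B l (i := i) (x := N)
      fun h => by simp [h, isOut] at hi
    simp only [hlast]
    rw [flipRuns_append_cons hB hi, List.count_append, List.count_cons,
      count_S_eq_zero_of_forall_isOut hB]
    rcases B.eq_nil_or_concat' with rfl | ⟨L, b, rfl⟩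
    · rw [List.reverse_nil, List.nil_append, List.nil_append, invert_cons,
        inVertPairs_cons_of_not_isOut hi, signedPeak_cons_of_not_isOut hi]
      cases i <;> simp [isOut, isVert] at hi ⊢ <;> linarith
    · have hL : ∀ s ∈ L, isOut s = true := fun s hs => hB s (by simp [hs])
      have hb : isOut b = true := hB b (by simp)
      rw [List.reverse_concat, List.cons_append, invert_cons, inVertPairs_cons_of_isOut hb,
        inVertPairs_append_of_forall_isOut (by simpa using hL), inVertPairs_cons_of_not_isOut hi,
        List.append_assoc, List.singleton_append, signedPeak_append_of_forall_isOut hL hb,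
        signedPeak_cons_cons, signedPeak_cons_of_not_isOut hi]
      cases b <;> cases i <;> simp [isOut, isVert] at hb hi ⊢ <;> linarith

theorem getLast?_ne_some_N_of_filter_isVert {σ : List Step}
    (h : (σ.filter isVert).getLast? = some S) : σ.getLast? ≠ some N := by
  intro hN
  obtain ⟨ys, rfl⟩ := List.getLast?_eq_some_iff.mp hN
  simp [List.filter_append, isVert] at h

theorem flip_shifted_invert_eq_signedPeak_general (V H : List Step)
    (hVlast : V.getLast? = some Step.S) :
    (∀ σ : List Step, IsShuffle V H σ → IsShuffle V H (flipRuns σ))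
    ∧ (∀ σ : List Step, IsShuffle V H σ →
        (invert (flipRuns σ) : ℤ) - ((flipRuns σ).count Step.S : ℤ) = signedPeak σ) := by
  refine ⟨fun σ hσ => isShuffle_flipRuns hσ, fun σ hσ => ?_⟩
  have hN : σ.getLast? ≠ some N := getLast?_ne_some_N_of_filter_isVert (hσ.1 ▸ hVlast)
  rw [count_S_flipRuns, invert_flipRuns_sub_count_S, if_neg hN, add_zero]

/-- **Proposition (flipRuns intertwines shifted In-Vert and signed peak-count).**
If `V` is a nonempty vertical path ending in `S` and `H` is a horizontal path, then `flipRuns`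
maps shuffles of `V` and `H` to shuffles of `V` and `H`, and the shifted In-Vert of
`flipRuns σ` equals the signed peak-count of `σ`. -/
theorem flip_shifted_invert_eq_signedPeak (V H : List Step)
    (hV : ∀ s ∈ V, isVert s = true) (hVne : V ≠ [])
    (hVlast : V.getLast? = some Step.S)
    (hH : ∀ s ∈ H, isHoriz s = true) :
    (∀ σ : List Step, IsShuffle V H σ → IsShuffle V H (flipRuns σ))
    ∧ (∀ σ : List Step, IsShuffle V H σ →
        (invert (flipRuns σ) : ℤ) - ((flipRuns σ).count Step.S : ℤ) = signedPeak σ) :=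
  flip_shifted_invert_eq_signedPeak_general V H hVlast
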